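/- The cosine class COS(ℝ) of the additive group of real numbers equals { x ↦ cos(2πyx) : y ∈ [0, ∞) } (viewed as complex-valued functions on ℝ), and the assignment y ↦ (x ↦ cos(2πyx)) is injective on [0, ∞). -/

import Mathlib

/-!
A nonzero solution of d'Alembert's equation has `φ 0 = 1` and is even. If `φ a ^ 2 ≠ 1` for
some `a`, the companion `s x = (φ (x + a) - φ (x - a)) / 2` obeys the addition formulas of the
sine, so with `c ^ 2 * (φ a ^ 2 - 1) = 1` the function `E = φ + c • s` is a bounded continuous
character of `ℝ` and `φ x = (E x + E (-x)) / 2`. Averaging `E (x + t) = E x * E t` over an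
interval shows that `E` is differentiable, so `E' = E'(0) • E` and `E x = exp (k x)`; boundedness
forces `k ∈ iℝ`, i.e. `φ x = cos (|k| x)`. If instead `φ ^ 2 ≡ 1`, then
`φ x = 2 φ (x / 2) ^ 2 - 1 = 1`.
-/

open Real

/-- The cosine class `COS(G)`: nonzero bounded continuous `φ : G → ℂ` satisfying the
d'Alembert equation `φ(x) φ(y) = (φ(x+y) + φ(x-y))/2`. -/
def CosClass (G : Type*) [AddCommGroup G] [TopologicalSpace G] : Set (G → ℂ) :=
  {φ | Continuous φ ∧ (∃ C, ∀ x, ‖φ x‖ ≤ C) ∧ φ ≠ 0 ∧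
    ∀ x y, φ x * φ y = (φ (x + y) + φ (x - y)) / 2}

def SatisfiesDAlembert {G : Type*} [AddCommGroup G] (φ : G → ℂ) : Prop :=
  ∀ x y, φ x * φ y = (φ (x + y) + φ (x - y)) / 2

/-- For `φ = cos` this is `x ↦ -sin a * sin x`. -/
noncomputable def sineCompanion {G : Type*} [AddCommGroup G] (φ : G → ℂ) (a x : G) : ℂ :=
  (φ (x + a) - φ (x - a)) / 2

namespace SatisfiesDAlembert

variable {G : Type*} [AddCommGroup G] {φ : G → ℂ}

theorem apply_zero (hφ : SatisfiesDAlembert φ) (hne : φ ≠ 0) : φ 0 = 1 := by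
  obtain ⟨x, hx⟩ := Function.ne_iff.1 hne
  have h := hφ x 0
  rw [add_zero, sub_zero, add_self_div_two] at h
  exact mul_left_cancel₀ hx (h.trans (mul_one _).symm)

theorem apply_neg (hφ : SatisfiesDAlembert φ) (h0 : φ 0 = 1) (x : G) : φ (-x) = φ x := by
  have h := hφ 0 x
  rw [zero_add, zero_sub, h0, one_mul] at h
  linear_combination -2 * h

theorem apply_add_self (hφ : SatisfiesDAlembert φ) (h0 : φ 0 = 1) (x : G) :
    φ (x + x) = 2 * φ x ^ 2 - 1 := by
  have h := hφ x x
  rw [sub_self, h0] at h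
  linear_combination -2 * h

theorem sineCompanion_neg (hφ : SatisfiesDAlembert φ) (h0 : φ 0 = 1) (a x : G) :
    sineCompanion φ a (-x) = -sineCompanion φ a x := by
  rw [sineCompanion, sineCompanion, ← hφ.apply_neg h0 (-x + a), ← hφ.apply_neg h0 (-x - a)]
  abel_nf
  ring

theorem sineCompanion_zero (hφ : SatisfiesDAlembert φ) (h0 : φ 0 = 1) (a : G) :
    sineCompanion φ a 0 = 0 := by
  rw [sineCompanion, zero_add, zero_sub, hφ.apply_neg h0, sub_self, zero_div]

theorem sineCompanion_add (hφ : SatisfiesDAlembert φ) (a x y : G) :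
    sineCompanion φ a (x + y) = sineCompanion φ a x * φ y + φ x * sineCompanion φ a y := by
  have h₁ := hφ (x + a) y
  have h₂ := hφ (x - a) y
  have h₃ := hφ x (y + a)
  have h₄ := hφ x (y - a)
  unfold sineCompanion
  abel_nf at h₁ h₂ h₃ h₄ ⊢
  linear_combination (-1 / 2 : ℂ) * (h₁ - h₂ + h₃ - h₄)

theorem sineCompanion_mul_sineCompanion (hφ : SatisfiesDAlembert φ) (h0 : φ 0 = 1) (a x y : G) :
    sineCompanion φ a x * sineCompanion φ a y = (φ a ^ 2 - 1) * (φ (x + y) - φ x * φ y) := by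
  have h₁ := hφ (x + a) (y + a)
  have h₂ := hφ (x - a) (y - a)
  have h₃ := hφ (x + a) (y - a)
  have h₄ := hφ (x - a) (y + a)
  have h₅ := hφ (x + y) (a + a)
  have h₆ := hφ (x - y) (a + a)
  have h₇ := hφ x y
  rw [hφ.apply_add_self h0 a] at h₅ h₆
  unfold sineCompanion
  abel_nf at h₁ h₂ h₃ h₄ h₅ h₆ h₇ ⊢
  linear_combination
    (1 / 4 : ℂ) * (h₁ + h₂ - h₃ - h₄ - h₅ + h₆) + (φ a ^ 2 - 1) * h₇

/-- The analogue of Euler's formula `cos + i sin = exp (i ·)`. -/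
theorem add_mul_sineCompanion_add (hφ : SatisfiesDAlembert φ) (h0 : φ 0 = 1) {a : G} {c : ℂ}
    (hc : c ^ 2 * (φ a ^ 2 - 1) = 1) (x y : G) :
    φ (x + y) + c * sineCompanion φ a (x + y) =
      (φ x + c * sineCompanion φ a x) * (φ y + c * sineCompanion φ a y) := by
  linear_combination c * hφ.sineCompanion_add a x y -
    c ^ 2 * hφ.sineCompanion_mul_sineCompanion h0 a x y - (φ (x + y) - φ x * φ y) * hc

end SatisfiesDAlembert

theorem exists_intervalIntegral_ne_zero {E : Type*} [NormedAddCommGroup E] [NormedSpace ℝ E]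
    [CompleteSpace E] {f : ℝ → E} (hf : Continuous f) {a : ℝ} (ha : f a ≠ 0) :
    ∃ b, ∫ t in a..b, f t ≠ 0 := by
  by_contra! h
  have hderiv := (hf.integral_hasStrictDerivAt a a).hasDerivAt
  rw [show (fun u => ∫ t in a..u, f t) = fun _ => 0 from funext h] at hderiv
  exact ha (hderiv.unique (hasDerivAt_const a 0))

section MapAddEqMul

variable {𝕜 : Type*} [RCLike 𝕜] {f : ℝ → 𝕜}

theorem differentiable_of_map_add_eq_mul (hf : Continuous f) (hf0 : f 0 ≠ 0)
    (hadd : ∀ x y, f (x + y) = f x * f y) : Differentiable ℝ f := by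
  obtain ⟨δ, hδ⟩ := exists_intervalIntegral_ne_zero hf hf0
  set F : ℝ → 𝕜 := fun u => ∫ t in (0 : ℝ)..u, f t
  have hF : Differentiable ℝ F := intervalIntegral.differentiable_integral_of_continuous hf
  -- integrating `f (x + t) = f x * f t` over `t ∈ [0, δ]` expresses `f` through a primitive
  have hshift (x : ℝ) : f x * F δ = F (x + δ) - F x := by
    rw [← intervalIntegral.integral_const_mul, intervalIntegral.integral_interval_sub_left
      (hf.intervalIntegrable _ _) (hf.intervalIntegrable _ _)]
    simp_rw [← hadd]
    simp
  have hfF : f = fun x => (F (x + δ) - F x) / F δ :=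
    funext fun x => by rw [← hshift, mul_div_cancel_right₀ _ hδ]
  rw [hfF]
  exact ((hF.comp (differentiable_id.add_const δ)).sub hF).div_const _

theorem hasDerivAt_of_map_add_eq_mul (hadd : ∀ x y, f (x + y) = f x * f y) {k : 𝕜}
    (hk : HasDerivAt f k 0) (x : ℝ) : HasDerivAt f (f x * k) x := by
  have hk' : HasDerivAt (fun y => f x * f y) (f x * k) (x - x) := by
    rw [sub_self]; exact hk.const_mul (f x)
  exact (hk'.comp_sub_const x x).congr_of_eventuallyEq
    (.of_forall fun y => by simp [← hadd])

end MapAddEqMul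

theorem eq_cexp_mul_of_hasDerivAt {f : ℝ → ℂ} {k : ℂ} (hf : ∀ x, HasDerivAt f (f x * k) x)
    (hf0 : f 0 = 1) (x : ℝ) : f x = Complex.exp (k * x) := by
  have hexp (y : ℝ) : HasDerivAt (fun y : ℝ => Complex.exp (-(k * y)))
      (-(Complex.exp (-(k * y)) * k)) y := by
    simpa using ((hasDerivAt_id (y : ℂ)).const_mul k).neg.cexp.comp_ofReal
  have hconst (y : ℝ) : HasDerivAt (fun y : ℝ => f y * Complex.exp (-(k * y))) 0 y :=
    ((hf y).mul (hexp y)).congr_deriv (by ring)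
  have h := is_const_of_deriv_eq_zero (fun y => (hconst y).differentiableAt)
    (fun y => (hconst y).deriv) x 0
  simp only [Complex.ofReal_zero, mul_zero, neg_zero, Complex.exp_zero, mul_one, hf0] at h
  rw [← mul_one (f x), ← Complex.exp_zero, ← neg_add_cancel (k * x), Complex.exp_add,
    ← mul_assoc, h, one_mul]

theorem exists_eq_cexp_mul_of_map_add_eq_mul {f : ℝ → ℂ} (hf : Continuous f) (hf0 : f 0 = 1)
    (hadd : ∀ x y, f (x + y) = f x * f y) : ∃ k : ℂ, ∀ x : ℝ, f x = Complex.exp (k * x) :=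
  have hdiff := differentiable_of_map_add_eq_mul hf (hf0 ▸ one_ne_zero) hadd
  ⟨deriv f 0, eq_cexp_mul_of_hasDerivAt
    (hasDerivAt_of_map_add_eq_mul hadd (hdiff 0).hasDerivAt) hf0⟩

theorem re_eq_zero_of_norm_cexp_mul_le {k : ℂ} {C : ℝ}
    (hC : ∀ x : ℝ, ‖Complex.exp (k * x)‖ ≤ C) : k.re = 0 := by
  by_contra hk
  have h := hC ((|C| + 1) / k.re)
  rw [Complex.norm_exp, Complex.re_mul_ofReal, mul_div_cancel₀ _ hk] at h
  linarith [add_one_le_exp (|C| + 1), le_abs_self C]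

theorem cexp_mul_add_cexp_mul_neg_div_two {k : ℂ} (hk : k.re = 0) (x : ℝ) :
    (Complex.exp (k * x) + Complex.exp (k * (-x : ℝ))) / 2 = Real.cos (|k.im| * x) := by
  obtain ⟨t, rfl⟩ : ∃ t : ℝ, k = t * Complex.I :=
    ⟨k.im, Complex.ext (by simp [hk]) (by simp)⟩
  have habs : Real.cos (|t| * x) = Real.cos (t * x) := by
    rcases abs_cases t with ⟨h, -⟩ | ⟨h, -⟩ <;> simp [h, neg_mul]
  rw [Complex.mul_I_im, Complex.ofReal_re, habs, Complex.ofReal_cos, Complex.cos]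
  push_cast
  ring_nf

theorem norm_add_mul_sineCompanion_le {G : Type*} [AddCommGroup G] {φ : G → ℂ} {C : ℝ}
    (hC : ∀ x, ‖φ x‖ ≤ C) (c : ℂ) (a x : G) :
    ‖φ x + c * sineCompanion φ a x‖ ≤ C + ‖c‖ * C := by
  have hs : ‖sineCompanion φ a x‖ ≤ C := by
    rw [sineCompanion, norm_div, Complex.norm_two]
    linarith [norm_sub_le (φ (x + a)) (φ (x - a)), hC (x + a), hC (x - a)]
  calc ‖φ x + c * sineCompanion φ a x‖
      ≤ ‖φ x‖ + ‖c‖ * ‖sineCompanion φ a x‖ :=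
        (norm_add_le _ _).trans_eq (by rw [norm_mul])
    _ ≤ C + ‖c‖ * C := by gcongr; exact hC x

theorem exists_nonneg_eq_cos_mul_of_mem_cosClass {φ : ℝ → ℂ} (hφ : φ ∈ CosClass ℝ) :
    ∃ c : ℝ, 0 ≤ c ∧ φ = fun x => (Real.cos (c * x) : ℂ) := by
  obtain ⟨hcont, ⟨C, hC⟩, hne, hφ⟩ := hφ
  change SatisfiesDAlembert φ at hφ
  have h0 := hφ.apply_zero hne
  by_cases hsq : ∀ a, φ a ^ 2 = 1
  · refine ⟨0, le_rfl, funext fun x => ?_⟩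
    have h := hφ.apply_add_self h0 (x / 2)
    rw [add_halves, hsq] at h
    rw [h, zero_mul, Real.cos_zero]
    norm_num
  obtain ⟨a, ha⟩ := not_forall.1 hsq
  obtain ⟨c, hc⟩ : ∃ c : ℂ, c ^ 2 * (φ a ^ 2 - 1) = 1 := by
    obtain ⟨c, hc⟩ := IsAlgClosed.exists_pow_nat_eq (φ a ^ 2 - 1)⁻¹ two_pos
    exact ⟨c, by rw [hc, inv_mul_cancel₀ (sub_ne_zero.2 ha)]⟩
  obtain ⟨k, hk⟩ := exists_eq_cexp_mul_of_map_add_eq_mul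
    (f := fun x => φ x + c * sineCompanion φ a x)
    (by unfold sineCompanion; fun_prop)
    (by rw [hφ.sineCompanion_zero h0, h0, mul_zero, add_zero])
    (hφ.add_mul_sineCompanion_add h0 hc)
  have hk_re : k.re = 0 :=
    re_eq_zero_of_norm_cexp_mul_le fun x => hk x ▸ norm_add_mul_sineCompanion_le hC c a x
  refine ⟨|k.im|, abs_nonneg _, funext fun x => ?_⟩
  rw [← cexp_mul_add_cexp_mul_neg_div_two hk_re, ← hk, ← hk, hφ.apply_neg h0,
    hφ.sineCompanion_neg h0]
  ring

theorem cos_mul_mem_cosClass (c : ℝ) :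
    (fun x : ℝ => (Real.cos (c * x) : ℂ)) ∈ CosClass ℝ := by
  refine ⟨by fun_prop, ⟨1, fun x => ?_⟩, fun h => ?_, fun x y => ?_⟩
  · rw [Complex.norm_real, Real.norm_eq_abs]
    exact abs_cos_le_one _
  · simpa using congrFun h 0
  · dsimp only
    rw [mul_add, mul_sub, Real.cos_add, Real.cos_sub]
    push_cast
    ring

theorem injOn_cos_mul : Set.InjOn (fun c x : ℝ => Real.cos (c * x)) (Set.Ici 0) := by
  intro c₁ hc₁ c₂ hc₂ h
  wlog hle : c₁ ≤ c₂ generalizing c₁ c₂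
  · exact (this hc₂ hc₁ h.symm (le_of_not_ge hle)).symm
  rcases hle.eq_or_lt with rfl | hlt
  · rfl
  have hc₂pos : 0 < c₂ := lt_of_le_of_lt hc₁ hlt
  -- at `x = π / c₂` the arguments `c₁ π / c₂` and `π` both lie in `[0, π]`
  have h := congrFun h (π / c₂)
  simp only at h
  rw [mul_div_cancel₀ _ hc₂pos.ne'] at h
  have := injOn_cos ⟨mul_nonneg hc₁ (div_pos pi_pos hc₂pos).le, ?_⟩ ⟨pi_pos.le, le_rfl⟩ h
  · field_simp at this; linarith
  · rw [mul_div_left_comm]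
    exact mul_le_of_le_one_right pi_pos.le ((div_le_one hc₂pos).2 hle)

/-- `COS(ℝ) = { x ↦ cos(2πyx) : y ∈ [0, ∞) }` and `y ↦ (x ↦ cos(2πyx))`
is injective on `[0, ∞)`. -/
theorem cosClass_real_eq :
    CosClass ℝ = {φ : ℝ → ℂ |
      ∃ y : ℝ, 0 ≤ y ∧ φ = fun x => (Real.cos (2 * π * y * x) : ℂ)} ∧
    ∀ y₁ y₂ : ℝ, 0 ≤ y₁ → 0 ≤ y₂ →
      (fun x : ℝ => (Real.cos (2 * π * y₁ * x) : ℂ))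
        = (fun x : ℝ => (Real.cos (2 * π * y₂ * x) : ℂ)) → y₁ = y₂ := by
  refine ⟨Set.ext fun φ => ⟨fun hφ => ?_, ?_⟩, fun y₁ y₂ h₁ h₂ heq => ?_⟩
  · obtain ⟨c, hc, rfl⟩ := exists_nonneg_eq_cos_mul_of_mem_cosClass hφ
    refine ⟨c / (2 * π), by positivity, funext fun x => ?_⟩
    rw [mul_div_cancel₀ _ (by positivity)]
  · rintro ⟨y, -, rfl⟩
    exact cos_mul_mem_cosClass (2 * π * y)
  · have hcos : (fun x => Real.cos (2 * π * y₁ * x)) = fun x => Real.cos (2 * π * y₂ * x) :=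
      funext fun x => by exact_mod_cast congrFun heq x
    exact mul_left_cancel₀ (by positivity) <|
      injOn_cos_mul (by positivity : 0 ≤ 2 * π * y₁) (by positivity : 0 ≤ 2 * π * y₂) hcos
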